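/- Let M be an N-periodic infinite symmetric tridiagonal matrix with nonzero off-diagonal entries, and suppose polynomials A, B satisfy [M, A(M)_+ − A(M)_−] = 0 and [M, B(M)_+ − B(M)_−] = 0. Then for any polynomial Q, the matrix Q(M)(A(M)_+ − A(M)_−) + (B(M)_+ − B(M)_−) equals C(M)_+ − C(M)_− for some polynomial C, and [M, C(M)_+ − C(M)_−] = 0. -/

import Mathlib

/-!
Write `π(S) = S₊ - S₋`. The matrix `S = A(M)` is symmetric and commutes with `M`, so if `π(S)`
commutes with `M` then `M π(S)` is antisymmetric. Comparing the `(i, i+1)` entries of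
`[M, S] = 0` and `[M, π(S)] = 0` shows, as `y i ≠ 0`, that `S` has a constant diagonal `c`;
then `M π(S)` agrees above the diagonal with the symmetric matrix `M S - c M`, so
`M π(A(M)) = π((XA - cX)(M))`, which again commutes with `M`. Hence the matrices `π(C(M))`
commuting with `M` form a subspace stable under left multiplication by `M`, hence by `Q(M)`.
-/

namespace Toda

/-- Infinite ℤ×ℤ matrices over ℂ. -/
abbrev Mat : Type := ℤ → ℤ → ℂ

/-- Matrix multiplication (entrywise `tsum`; for band-type matrices these sums
are finitely supported). -/
noncomputable def mul (X Y : Mat) : Mat := fun i j => ∑' k : ℤ, X i k * Y k j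

/-- Commutator. -/
noncomputable def comm (X Y : Mat) : Mat := mul X Y - mul Y X

/-- Strictly upper triangular part. -/
def upper (X : Mat) : Mat := fun i j => if i < j then X i j else 0

/-- Strictly lower triangular part. -/
def lower (X : Mat) : Mat := fun i j => if j < i then X i j else 0

/-- Diagonal part. -/
def diagPart (X : Mat) : Mat := fun i j => if i = j then X i j else 0

/-- Identity matrix. -/
def one : Mat := fun i j => if i = j then 1 else 0

/-- Matrix powers. -/
noncomputable def pow (X : Mat) : ℕ → Mat
  | 0 => one
  | m + 1 => mul X (pow X m)

/-- Evaluate a polynomial on a matrix. -/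
noncomputable def evalPoly (A : Polynomial ℂ) (X : Mat) : Mat :=
  ∑ m ∈ Finset.range (A.natDegree + 1), A.coeff m • pow X m

/-- `N`-periodicity of entries. -/
def Periodic (N : ℕ) (X : Mat) : Prop := ∀ i j, X (i + N) (j + N) = X i j

/-- `X` has (pure) degree `k`: nonzero entries only on diagonal `j = i + k`. -/
def HasDegree (k : ℤ) (X : Mat) : Prop := ∀ i j, X i j ≠ 0 → j = i + k

/-- `X` has maximal degree `k`: entries vanish above diagonal `k`. -/
def MaxDeg (k : ℤ) (X : Mat) : Prop := ∀ i j, X i j ≠ 0 → j - i ≤ k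

/-- The infinite symmetric tridiagonal Toda Lax matrix with diagonal `φ` and
off-diagonal entries `y`. -/
def todaM (φ y : ℤ → ℂ) : Mat := fun i j =>
  if j = i then φ i
  else if j = i + 1 then y i
  else if i = j + 1 then y j
  else 0

/-- Degree-`r` component of a matrix. -/
def topPart (r : ℤ) (X : Mat) : Mat := fun i j => if j = i + r then X i j else 0

/-- Inverse of the degree-`r` component (a matrix of degree `-r`). -/
noncomputable def topInv (r : ℤ) (X : Mat) : Mat :=
  fun i j => if j = i - r then (X j (j + r))⁻¹ else 0

/-- Entrywise geometric series `Σ_{k≥0} (-1)^k Q^k`, which is a finite sum in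
each entry when `Q` has maximal degree `≤ -1`. -/
noncomputable def geomSeries (Q : Mat) : Mat :=
  fun i j => ∑ m ∈ Finset.range ((i - j).toNat + 1), (-1 : ℂ) ^ m * pow Q m i j

/-- The inverse `R⁻¹ = (R^{(r)})⁻¹ Σ_{k≥0} (-1)^k (R̃ (R^{(r)})⁻¹)^k` of a matrix
of maximal degree `r` with invertible top component. -/
noncomputable def geomInv (r : ℤ) (R : Mat) : Mat :=
  mul (topInv r R) (geomSeries (mul (R - topPart r R) (topInv r R)))

/-- Integer powers of a matrix, negative powers via the geometric-series inverse. -/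
noncomputable def intPow (X : Mat) (m : ℤ) : Mat :=
  if 0 ≤ m then pow X m.toNat else pow (geomInv 1 X) (-m).toNat

/-- Shift operator `Z = D^N`. -/
def shiftZ (N : ℕ) : Mat := fun i j => if j = i + N then 1 else 0

/-- Inverse shift `Z⁻¹`. -/
def shiftZinv (N : ℕ) : Mat := fun i j => if j = i - N then 1 else 0

/-- The finite `N×N` periodic Toda Lax matrix with spectral parameter `z`,
diagonal `p`, off-diagonal entries `y 1, …, y (N-1)` and corner entries
`y 0 * z`, `y 0 * z⁻¹`. -/
noncomputable def laxFin (N : ℕ) (p y : ℕ → ℂ) (z : ℂ) :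
    Matrix (Fin N) (Fin N) ℂ := fun i j =>
  if (i : ℕ) = j then p i
  else if (j : ℕ) = i + 1 then y (i + 1)
  else if (i : ℕ) = j + 1 then y (j + 1)
  else if (i : ℕ) = 0 ∧ (j : ℕ) = N - 1 then y 0 * z
  else if (i : ℕ) = N - 1 ∧ (j : ℕ) = 0 then y 0 * z⁻¹
  else 0

/-- Embedding of polynomials in `x` into the field `ℂ((x⁻¹))` of Laurent series
at infinity, sending `x` to the inverse of the local parameter. -/
noncomputable def atInf (p : Polynomial ℂ) : LaurentSeries ℂ :=
  Polynomial.eval₂ HahnSeries.C (HahnSeries.single (-1 : ℤ) 1) p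

def RowFinite (X : Mat) : Prop := ∀ i, ∃ s : Finset ℤ, ∀ k ∉ s, X i k = 0

section RowFinite

variable {X Y : Mat}

theorem mul_apply_eq_sum {i j : ℤ} {s : Finset ℤ} (h : ∀ k ∉ s, X i k = 0) :
    mul X Y i j = ∑ k ∈ s, X i k * Y k j :=
  tsum_eq_sum fun k hk => by rw [h k hk, zero_mul]

theorem mul_apply_eq_sum_of_col {i j : ℤ} {s : Finset ℤ} (h : ∀ k ∉ s, Y k j = 0) :
    mul X Y i j = ∑ k ∈ s, X i k * Y k j :=
  tsum_eq_sum fun k hk => by rw [h k hk, mul_zero]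

theorem RowFinite.mono (hX : RowFinite X) (h : ∀ i k, X i k = 0 → Y i k = 0) :
    RowFinite Y := fun i =>
  let ⟨s, hs⟩ := hX i
  ⟨s, fun k hk => h i k (hs k hk)⟩

theorem rowFinite_zero : RowFinite 0 := fun _ => ⟨∅, fun _ _ => rfl⟩

theorem rowFinite_one : RowFinite one := fun i =>
  ⟨{i}, fun _ hk => if_neg fun h => hk (Finset.mem_singleton.2 h.symm)⟩

theorem RowFinite.add (hX : RowFinite X) (hY : RowFinite Y) : RowFinite (X + Y) := fun i => by
  obtain ⟨s, hs⟩ := hX i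
  obtain ⟨t, ht⟩ := hY i
  refine ⟨s ∪ t, fun k hk => ?_⟩
  rw [Finset.mem_union, not_or] at hk
  simp [hs k hk.1, ht k hk.2]

theorem RowFinite.smul (c : ℂ) (hX : RowFinite X) : RowFinite (c • X) :=
  hX.mono fun i k h => by simp [h]

theorem rowFinite_sum {ι : Type*} {t : Finset ι} {F : ι → Mat} (hF : ∀ m ∈ t, RowFinite (F m)) :
    RowFinite (∑ m ∈ t, F m) :=
  Finset.sum_induction F RowFinite (fun _ _ => RowFinite.add) rowFinite_zero hF

theorem RowFinite.mul (hX : RowFinite X) (hY : RowFinite Y) : RowFinite (mul X Y) := fun i => by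
  classical
  choose t ht using hY
  obtain ⟨s, hs⟩ := hX i
  refine ⟨s.biUnion t, fun j hj => ?_⟩
  rw [mul_apply_eq_sum hs]
  refine Finset.sum_eq_zero fun k hk => ?_
  rw [ht k j fun h => hj (Finset.mem_biUnion.2 ⟨k, hk, h⟩), mul_zero]

theorem one_mul (X : Mat) : mul one X = X := by
  funext i j
  rw [mul_apply_eq_sum (s := {i}) fun k hk => if_neg fun h => hk (Finset.mem_singleton.2 h.symm)]
  simp [one]

theorem mul_one (X : Mat) : mul X one = X := by
  funext i j
  rw [mul_apply_eq_sum_of_col (s := {j}) fun k hk => if_neg fun h => hk (Finset.mem_singleton.2 h)]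
  simp [one]

theorem smul_mul (c : ℂ) (X Y : Mat) : mul (c • X) Y = c • mul X Y := by
  funext i j
  simp only [mul, Pi.smul_apply, smul_eq_mul, ← tsum_mul_left, _root_.mul_assoc]

theorem mul_smul (c : ℂ) (X Y : Mat) : mul X (c • Y) = c • mul X Y := by
  funext i j
  simp only [mul, Pi.smul_apply, smul_eq_mul, ← tsum_mul_left, mul_left_comm]

theorem mul_sum {ι : Type*} (t : Finset ι) (hX : RowFinite X) (F : ι → Mat) :
    mul X (∑ m ∈ t, F m) = ∑ m ∈ t, mul X (F m) := by
  funext i j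
  obtain ⟨s, hs⟩ := hX i
  simp only [Finset.sum_apply, mul_apply_eq_sum hs, Finset.mul_sum]
  exact Finset.sum_comm

theorem sum_mul {ι : Type*} {t : Finset ι} {F : ι → Mat} (hF : ∀ m ∈ t, RowFinite (F m))
    (X : Mat) : mul (∑ m ∈ t, F m) X = ∑ m ∈ t, mul (F m) X := by
  funext i j
  simp only [mul, Finset.sum_apply, Finset.sum_mul]
  refine Summable.tsum_finsetSum fun m hm => ?_
  obtain ⟨s, hs⟩ := hF m hm i
  exact summable_of_ne_finset_zero fun k hk => by rw [hs k hk, zero_mul]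

theorem mul_assoc {Z : Mat} (hX : RowFinite X) (hY : RowFinite Y) :
    mul (mul X Y) Z = mul X (mul Y Z) := by
  funext i j
  obtain ⟨s, hs⟩ := hX i
  calc mul (mul X Y) Z i j = ∑' k, ∑ l ∈ s, X i l * (Y l k * Z k j) := by
        refine tsum_congr fun k => ?_
        rw [mul_apply_eq_sum hs, Finset.sum_mul]
        simp only [_root_.mul_assoc]
    _ = ∑ l ∈ s, X i l * mul Y Z l j := by
        rw [Summable.tsum_finsetSum fun l _ => ?_]
        · exact Finset.sum_congr rfl fun l _ => tsum_mul_left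
        obtain ⟨t, ht⟩ := hY l
        exact summable_of_ne_finset_zero fun k hk => by rw [ht k hk, zero_mul, mul_zero]
    _ = mul X (mul Y Z) i j := (mul_apply_eq_sum hs).symm

end RowFinite

section Polynomial

open Polynomial

variable {X : Mat}

theorem RowFinite.pow (hX : RowFinite X) (m : ℕ) : RowFinite (pow X m) := by
  induction m with
  | zero => exact rowFinite_one
  | succ m ih => exact hX.mul ih

theorem mul_pow_comm (hX : RowFinite X) (m : ℕ) : mul X (pow X m) = mul (pow X m) X := by
  induction m with
  | zero => rw [pow, one_mul, mul_one]
  | succ m ih => rw [pow, mul_assoc hX (hX.pow m), ← ih]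

theorem pow_apply_symm (hX : RowFinite X) (hsymm : ∀ i j, X j i = X i j) (m : ℕ) (i j : ℤ) :
    pow X m j i = pow X m i j := by
  induction m generalizing i j with
  | zero => simp only [pow, one, eq_comm]
  | succ m ih =>
    show mul X (pow X m) j i = mul X (pow X m) i j
    conv_lhs => rw [mul_pow_comm hX]
    exact tsum_congr fun k => by rw [hsymm i k, ih k j, _root_.mul_comm]

theorem evalPoly_eq_sum_range (A : ℂ[X]) {n : ℕ} (hn : A.natDegree < n) (X : Mat) :
    evalPoly A X = ∑ m ∈ Finset.range n, A.coeff m • pow X m := by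
  refine Finset.sum_subset (fun m hm => ?_) fun m _ hm => ?_
  · simp only [Finset.mem_range] at hm ⊢
    omega
  · rw [coeff_eq_zero_of_natDegree_lt (by simpa using hm), zero_smul]

theorem evalPoly_eq_sum (A : ℂ[X]) (X : Mat) : evalPoly A X = A.sum fun m c => c • pow X m :=
  (A.sum_over_range (f := fun m c => c • pow X m) fun _ => zero_smul ℂ _).symm

theorem evalPoly_add (A B : ℂ[X]) (X : Mat) :
    evalPoly (A + B) X = evalPoly A X + evalPoly B X := by
  simp only [evalPoly_eq_sum]
  exact sum_add_index _ _ _ (fun _ => zero_smul ℂ _) fun _ _ _ => add_smul _ _ _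

theorem evalPoly_smul (c : ℂ) (A : ℂ[X]) (X : Mat) : evalPoly (c • A) X = c • evalPoly A X := by
  rw [evalPoly_eq_sum, evalPoly_eq_sum, sum_smul_index _ _ _ fun _ => zero_smul ℂ (pow X _)]
  simp only [sum_def, Finset.smul_sum, smul_smul]

theorem evalPoly_sub (A B : ℂ[X]) (X : Mat) :
    evalPoly (A - B) X = evalPoly A X - evalPoly B X := by
  rw [sub_eq_add_neg, ← neg_one_smul ℂ B, evalPoly_add, evalPoly_smul, neg_one_smul,
    ← sub_eq_add_neg]

theorem evalPoly_X (X : Mat) : evalPoly Polynomial.X X = X := by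
  rw [evalPoly_eq_sum, sum_X_index (zero_smul ℂ _), one_smul, pow, pow, mul_one]

theorem evalPoly_X_mul (A : ℂ[X]) (hX : RowFinite X) :
    evalPoly (Polynomial.X * A) X = mul X (evalPoly A X) := by
  have hdeg : (Polynomial.X * A).natDegree < A.natDegree + 1 + 1 := by
    have := natDegree_mul_le (p := (Polynomial.X : ℂ[X])) (q := A)
    rw [natDegree_X] at this
    omega
  rw [evalPoly_eq_sum_range _ hdeg, Finset.sum_range_succ', evalPoly, mul_sum _ hX]
  simp only [coeff_X_mul, mul_coeff_zero, coeff_X_zero, zero_mul, zero_smul, add_zero, mul_smul]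
  rfl

theorem RowFinite.evalPoly (hX : RowFinite X) (A : ℂ[X]) : RowFinite (evalPoly A X) :=
  rowFinite_sum fun m _ => (hX.pow m).smul _

theorem mul_evalPoly_comm (hX : RowFinite X) (A : ℂ[X]) :
    mul X (evalPoly A X) = mul (evalPoly A X) X := by
  rw [evalPoly, mul_sum _ hX, sum_mul fun m _ => (hX.pow m).smul _]
  exact Finset.sum_congr rfl fun m _ => by rw [mul_smul, smul_mul, mul_pow_comm hX]

theorem evalPoly_apply_symm (hX : RowFinite X) (hsymm : ∀ i j, X j i = X i j) (A : ℂ[X])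
    (i j : ℤ) : evalPoly A X j i = evalPoly A X i j := by
  simp only [evalPoly, Finset.sum_apply, Pi.smul_apply, pow_apply_symm hX hsymm]

end Polynomial

def skewProj (X : Mat) : Mat := upper X - lower X

section skewProj

variable {X : Mat} {i j : ℤ}

theorem skewProj_apply_of_lt (h : i < j) : skewProj X i j = X i j := by
  simp [skewProj, upper, lower, h, h.not_gt]

theorem skewProj_apply_of_gt (h : j < i) : skewProj X i j = -X i j := by
  simp [skewProj, upper, lower, h, h.not_gt]

theorem skewProj_apply_self : skewProj X i i = 0 := by
  simp [skewProj, upper, lower]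

theorem skewProj_add (X Y : Mat) : skewProj (X + Y) = skewProj X + skewProj Y := by
  funext i j
  simp only [skewProj, upper, lower, Pi.add_apply, Pi.sub_apply]
  split_ifs <;> ring

theorem skewProj_smul (c : ℂ) (X : Mat) : skewProj (c • X) = c • skewProj X := by
  funext i j
  simp only [skewProj, upper, lower, Pi.smul_apply, Pi.sub_apply, smul_eq_mul]
  split_ifs <;> ring

theorem RowFinite.skewProj (hX : RowFinite X) : RowFinite (skewProj X) :=
  hX.mono fun i k h => by simp [Toda.skewProj, upper, lower, h]

theorem skewProj_apply_antisymm (hX : ∀ i j, X j i = X i j) (i j : ℤ) :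
    skewProj X j i = -skewProj X i j := by
  rcases lt_trichotomy i j with h | rfl | h
  · rw [skewProj_apply_of_gt h, skewProj_apply_of_lt h, hX]
  · rw [skewProj_apply_self, neg_zero]
  · rw [skewProj_apply_of_lt h, skewProj_apply_of_gt h, hX, neg_neg]

theorem eq_skewProj_of_antisymm {Y : Mat} (hY : ∀ i j, Y j i = -Y i j)
    (hX : ∀ i j, X j i = X i j) (h : ∀ i j, i < j → Y i j = X i j) : Y = skewProj X := by
  funext i j
  rcases lt_trichotomy i j with hij | rfl | hij
  · rw [skewProj_apply_of_lt hij, h i j hij]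
  · rw [skewProj_apply_self]
    linear_combination hY i i / 2
  · rw [skewProj_apply_of_gt hij, hY j i, h j i hij, hX]

end skewProj

section todaM

open Polynomial

variable (φ y : ℤ → ℂ)

theorem todaM_apply_self (i : ℤ) : todaM φ y i i = φ i := by
  simp [todaM]

theorem todaM_apply_add_one (i : ℤ) : todaM φ y i (i + 1) = y i := by
  simp [todaM]

theorem todaM_apply_sub_one (i : ℤ) : todaM φ y i (i - 1) = y (i - 1) := by
  simp only [todaM]
  split_ifs <;> first | rfl | omega

theorem todaM_apply_of_ne {i k : ℤ} (h₁ : k ≠ i - 1) (h₂ : k ≠ i) (h₃ : k ≠ i + 1) :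
    todaM φ y i k = 0 := by
  simp only [todaM]
  split_ifs <;> first | rfl | omega

theorem todaM_apply_symm (i j : ℤ) : todaM φ y j i = todaM φ y i j := by
  simp only [todaM]
  split_ifs <;> first | rfl | omega | simp_all

theorem rowFinite_todaM : RowFinite (todaM φ y) := fun i =>
  ⟨{i - 1, i, i + 1}, fun k hk => by
    simp only [Finset.mem_insert, Finset.mem_singleton, not_or] at hk
    exact todaM_apply_of_ne φ y hk.1 hk.2.1 hk.2.2⟩

theorem todaM_mul_apply (X : Mat) (i j : ℤ) :
    mul (todaM φ y) X i j = y (i - 1) * X (i - 1) j + φ i * X i j + y i * X (i + 1) j := by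
  rw [mul_apply_eq_sum (s := {i - 1, i, i + 1}) fun k hk => by
    simp only [Finset.mem_insert, Finset.mem_singleton, not_or] at hk
    exact todaM_apply_of_ne φ y hk.1 hk.2.1 hk.2.2]
  rw [Finset.sum_insert (by simp only [Finset.mem_insert, Finset.mem_singleton]; omega),
    Finset.sum_insert (by simp), Finset.sum_singleton,
    todaM_apply_sub_one, todaM_apply_self, todaM_apply_add_one, add_assoc]

theorem mul_todaM_apply (X : Mat) (i j : ℤ) :
    mul X (todaM φ y) i j = X i (j - 1) * y (j - 1) + X i j * φ j + X i (j + 1) * y j := by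
  rw [mul_apply_eq_sum_of_col (s := {j - 1, j, j + 1}) fun k hk => by
    simp only [Finset.mem_insert, Finset.mem_singleton, not_or] at hk
    rw [todaM_apply_symm]
    exact todaM_apply_of_ne φ y hk.1 hk.2.1 hk.2.2]
  rw [Finset.sum_insert (by simp only [Finset.mem_insert, Finset.mem_singleton]; omega),
    Finset.sum_insert (by simp), Finset.sum_singleton,
    todaM_apply_symm φ y j (j - 1), todaM_apply_symm φ y j (j + 1), todaM_apply_sub_one, todaM_apply_self,
    todaM_apply_add_one, add_assoc]

theorem comm_todaM_apply (X : Mat) (i j : ℤ) :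
    comm (todaM φ y) X i j
      = y (i - 1) * X (i - 1) j + φ i * X i j + y i * X (i + 1) j
        - (X i (j - 1) * y (j - 1) + X i j * φ j + X i (j + 1) * y j) := by
  rw [← todaM_mul_apply, ← mul_todaM_apply]
  rfl

theorem comm_todaM_add (X Y : Mat) :
    comm (todaM φ y) (X + Y) = comm (todaM φ y) X + comm (todaM φ y) Y := by
  funext i j
  simp only [Pi.add_apply, comm_todaM_apply]
  ring

theorem comm_todaM_smul (c : ℂ) (X : Mat) :
    comm (todaM φ y) (c • X) = c • comm (todaM φ y) X := by
  funext i j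
  simp only [Pi.smul_apply, smul_eq_mul, comm_todaM_apply]
  ring

theorem todaM_mul_apply_antisymm {P : Mat} (hP : ∀ i j, P j i = -P i j)
    (hc : comm (todaM φ y) P = 0) (i j : ℤ) :
    mul (todaM φ y) P j i = -mul (todaM φ y) P i j := by
  rw [congrFun (congrFun (sub_eq_zero.1 hc) j) i, mul_todaM_apply, todaM_mul_apply,
    hP (i - 1) j, hP i j, hP (i + 1) j]
  ring

variable {φ y}

/-- The `(i, i+1)` entries of `[M, S] = 0` and `[M, S₊ - S₋] = 0` differ exactly by
`y i * (S (i+1) (i+1) - S i i)`. -/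
theorem apply_add_one_self_eq {S : Mat} {i : ℤ} (hyi : y i ≠ 0) (hS : comm (todaM φ y) S = 0)
    (hP : comm (todaM φ y) (skewProj S) = 0) : S (i + 1) (i + 1) = S i i := by
  have h₁ := congrFun (congrFun hS i) (i + 1)
  have h₂ := congrFun (congrFun hP i) (i + 1)
  rw [comm_todaM_apply, show i + 1 - 1 = i by ring, show i + 1 + 1 = i + 2 by ring] at h₁ h₂
  rw [skewProj_apply_of_lt (by omega : i - 1 < i + 1), skewProj_apply_of_lt (by omega : i < i + 1),
    skewProj_apply_of_lt (by omega : i < i + 2), skewProj_apply_self, skewProj_apply_self] at h₂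
  exact mul_left_cancel₀ hyi (by linear_combination h₁ - h₂)

theorem apply_self_eq_apply_zero_zero {S : Mat} (hy0 : ∀ i, y i ≠ 0)
    (hS : comm (todaM φ y) S = 0) (hP : comm (todaM φ y) (skewProj S) = 0) (i : ℤ) :
    S i i = S 0 0 := by
  induction i using Int.induction_on with
  | zero => rfl
  | succ n ih => rw [apply_add_one_self_eq (hy0 n) hS hP, ih]
  | pred n ih =>
    rw [← ih, ← apply_add_one_self_eq (hy0 _) hS hP, sub_add_cancel]

theorem todaM_mul_skewProj_apply_of_lt {S : Mat} {c : ℂ} (hdiag : ∀ i, S i i = c) {i j : ℤ}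
    (h : i < j) : mul (todaM φ y) (skewProj S) i j = mul (todaM φ y) S i j - c * todaM φ y i j := by
  rw [todaM_mul_apply, todaM_mul_apply, skewProj_apply_of_lt (by omega : i - 1 < j),
    skewProj_apply_of_lt h]
  rcases (show j = i + 1 ∨ i + 1 < j by omega) with rfl | hj
  · rw [skewProj_apply_self, hdiag, todaM_apply_add_one]
    ring
  · rw [skewProj_apply_of_lt hj, todaM_apply_of_ne φ y (by omega) (by omega) (by omega)]
    ring

theorem todaM_mul_skewProj_evalPoly (hy0 : ∀ i, y i ≠ 0) {A : ℂ[X]}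
    (hA : comm (todaM φ y) (skewProj (evalPoly A (todaM φ y))) = 0) :
    mul (todaM φ y) (skewProj (evalPoly A (todaM φ y)))
      = skewProj (evalPoly (X * A - evalPoly A (todaM φ y) 0 0 • X) (todaM φ y)) := by
  have hM := rowFinite_todaM φ y
  have hsymm := todaM_apply_symm φ y
  have hS : comm (todaM φ y) (evalPoly A (todaM φ y)) = 0 :=
    sub_eq_zero.2 (mul_evalPoly_comm hM A)
  refine eq_skewProj_of_antisymm (todaM_mul_apply_antisymm φ y
    (skewProj_apply_antisymm (evalPoly_apply_symm hM hsymm A)) hA)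
    (evalPoly_apply_symm hM hsymm _) fun i j hij => ?_
  rw [evalPoly_sub, evalPoly_X_mul _ hM, evalPoly_smul, evalPoly_X]
  exact todaM_mul_skewProj_apply_of_lt (apply_self_eq_apply_zero_zero hy0 hS hA) hij

variable (φ y)

def skewCommutant : Submodule ℂ Mat where
  carrier := {P | (∃ C : ℂ[X], P = skewProj (evalPoly C (todaM φ y))) ∧ comm (todaM φ y) P = 0}
  zero_mem' := ⟨⟨0, by funext i j; simp [skewProj, upper, lower, evalPoly]⟩,
    by funext i j; simp [comm, mul]⟩
  add_mem' := by
    rintro _ _ ⟨⟨C, rfl⟩, hC⟩ ⟨⟨D, rfl⟩, hD⟩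
    exact ⟨⟨C + D, by rw [evalPoly_add, skewProj_add]⟩, by rw [comm_todaM_add, hC, hD, add_zero]⟩
  smul_mem' := by
    rintro c _ ⟨⟨C, rfl⟩, hC⟩
    exact ⟨⟨c • C, by rw [evalPoly_smul, skewProj_smul]⟩, by rw [comm_todaM_smul, hC, smul_zero]⟩

variable {φ y}

theorem RowFinite.of_mem_skewCommutant {P : Mat} (hP : P ∈ skewCommutant φ y) : RowFinite P := by
  obtain ⟨⟨C, rfl⟩, -⟩ := hP
  exact ((rowFinite_todaM φ y).evalPoly C).skewProj

theorem todaM_mul_mem_skewCommutant (hy0 : ∀ i, y i ≠ 0) {P : Mat}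
    (hP : P ∈ skewCommutant φ y) : mul (todaM φ y) P ∈ skewCommutant φ y := by
  have hPfin := RowFinite.of_mem_skewCommutant hP
  obtain ⟨⟨C, rfl⟩, hC⟩ := hP
  refine ⟨⟨_, todaM_mul_skewProj_evalPoly hy0 hC⟩, ?_⟩
  rw [comm, mul_assoc (rowFinite_todaM φ y) hPfin, ← sub_eq_zero.1 hC, sub_self]

theorem pow_mul_mem_skewCommutant (hy0 : ∀ i, y i ≠ 0) {P : Mat}
    (hP : P ∈ skewCommutant φ y) (m : ℕ) : mul (pow (todaM φ y) m) P ∈ skewCommutant φ y := by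
  induction m with
  | zero => rwa [pow, one_mul]
  | succ m ih =>
    rw [pow, mul_assoc (rowFinite_todaM φ y) ((rowFinite_todaM φ y).pow m)]
    exact todaM_mul_mem_skewCommutant hy0 ih

theorem evalPoly_mul_mem_skewCommutant (hy0 : ∀ i, y i ≠ 0) (Q : ℂ[X]) {P : Mat}
    (hP : P ∈ skewCommutant φ y) : mul (evalPoly Q (todaM φ y)) P ∈ skewCommutant φ y := by
  rw [evalPoly, sum_mul fun m _ => ((rowFinite_todaM φ y).pow m).smul _]
  exact Submodule.sum_mem _ fun m _ => by
    rw [smul_mul]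
    exact Submodule.smul_mem _ _ (pow_mul_mem_skewCommutant hy0 hP m)

end todaM

theorem euclid_step_closure_general
    (φ y : ℤ → ℂ)
    (hy0 : ∀ i, y i ≠ 0)
    (A B : Polynomial ℂ)
    (hA : comm (todaM φ y)
      (upper (evalPoly A (todaM φ y)) - lower (evalPoly A (todaM φ y))) = 0)
    (hB : comm (todaM φ y)
      (upper (evalPoly B (todaM φ y)) - lower (evalPoly B (todaM φ y))) = 0) :
    ∀ Q : Polynomial ℂ, ∃ C : Polynomial ℂ,
      mul (evalPoly Q (todaM φ y))
          (upper (evalPoly A (todaM φ y)) - lower (evalPoly A (todaM φ y)))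
        + (upper (evalPoly B (todaM φ y)) - lower (evalPoly B (todaM φ y)))
        = upper (evalPoly C (todaM φ y)) - lower (evalPoly C (todaM φ y)) ∧
      comm (todaM φ y)
        (upper (evalPoly C (todaM φ y)) - lower (evalPoly C (todaM φ y))) = 0 := by
  intro Q
  have hAmem : skewProj (evalPoly A (todaM φ y)) ∈ skewCommutant φ y := ⟨⟨A, rfl⟩, hA⟩
  have hBmem : skewProj (evalPoly B (todaM φ y)) ∈ skewCommutant φ y := ⟨⟨B, rfl⟩, hB⟩
  obtain ⟨⟨C, hC⟩, hCcomm⟩ := add_mem (evalPoly_mul_mem_skewCommutant hy0 Q hAmem) hBmem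
  rw [hC] at hCcomm
  exact ⟨C, hC, hCcomm⟩

/-- closure property for the Euclid algorithm: if
`[M, A(M)₊ − A(M)₋] = 0` and `[M, B(M)₊ − B(M)₋] = 0`, then for any polynomial
`Q` the matrix `Q(M)(A(M)₊ − A(M)₋) + (B(M)₊ − B(M)₋)` is of the form
`C(M)₊ − C(M)₋` and commutes with `M`. -/
theorem euclid_step_closure
    (N : ℕ) (hN : 0 < N) (φ y : ℤ → ℂ)
    (hφ : ∀ i, φ (i + N) = φ i) (hy : ∀ i, y (i + N) = y i)
    (hy0 : ∀ i, y i ≠ 0)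
    (A B : Polynomial ℂ)
    (hA : comm (todaM φ y)
      (upper (evalPoly A (todaM φ y)) - lower (evalPoly A (todaM φ y))) = 0)
    (hB : comm (todaM φ y)
      (upper (evalPoly B (todaM φ y)) - lower (evalPoly B (todaM φ y))) = 0) :
    ∀ Q : Polynomial ℂ, ∃ C : Polynomial ℂ,
      mul (evalPoly Q (todaM φ y))
          (upper (evalPoly A (todaM φ y)) - lower (evalPoly A (todaM φ y)))
        + (upper (evalPoly B (todaM φ y)) - lower (evalPoly B (todaM φ y)))
        = upper (evalPoly C (todaM φ y)) - lower (evalPoly C (todaM φ y)) ∧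
      comm (todaM φ y)
        (upper (evalPoly C (todaM φ y)) - lower (evalPoly C (todaM φ y))) = 0 :=
  euclid_step_closure_general φ y hy0 A B hA hB

end Toda
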